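/- arXiv:2602.11816 — 2 statements merged into one kernel-verified Lean document; each statement's English description precedes it below -/
import Mathlib

section
/- Let q be a prime with q > 2 and let n = 2q. Then the metric dimension of the barycentric subdivision of the zero divisor graph of Z_n equals q - 2, i.e. dim(BS(Γ(Z_{2q}))) = q - 2. -/
open SimpleGraph

/-- The nonzero zero-divisors of `ZMod n`. -/
def ZDVert (n : ℕ) : Type :=
  {a : ZMod n // a ≠ 0 ∧ ∃ b : ZMod n, b ≠ 0 ∧ a * b = 0}

/-- The zero-divisor graph of `ZMod n`: vertices are the nonzero zero-divisors,
with distinct vertices adjacent iff their product is zero. -/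
def zdGraph (n : ℕ) : SimpleGraph (ZDVert n) where
  Adj a b := a ≠ b ∧ a.1 * b.1 = 0
  symm := by
    constructor
    rintro a b ⟨hab, h⟩
    exact ⟨hab.symm, by rwa [mul_comm] at h⟩
  loopless := by
    constructor
    rintro a ⟨hne, -⟩
    exact hne rfl

/-- The barycentric subdivision of a simple graph: vertices are the disjoint union
of the original vertices and the edges, an original vertex is adjacent to an
edge-vertex iff it is an endpoint of that edge, and there are no other adjacencies. -/
def BS {V : Type*} (G : SimpleGraph V) : SimpleGraph (V ⊕ G.edgeSet) where
  Adj x y :=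
    (∃ (v : V) (e : G.edgeSet), x = Sum.inl v ∧ y = Sum.inr e ∧ v ∈ e.1) ∨
    (∃ (v : V) (e : G.edgeSet), x = Sum.inr e ∧ y = Sum.inl v ∧ v ∈ e.1)
  symm := by
    constructor
    rintro x y (⟨v, e, rfl, rfl, h⟩ | ⟨v, e, rfl, rfl, h⟩)
    · exact Or.inr ⟨v, e, rfl, rfl, h⟩
    · exact Or.inl ⟨v, e, rfl, rfl, h⟩
  loopless := by
    constructor
    rintro x (⟨v, e, rfl, h, -⟩ | ⟨v, e, rfl, h, -⟩) <;> simp at h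

/-- A set of vertices is resolving if any two distinct vertices are distinguished
by their distance to some vertex of the set. -/
def IsResolving {V : Type*} (G : SimpleGraph V) (W : Set V) : Prop :=
  ∀ x y : V, x ≠ y → ∃ w ∈ W, G.dist x w ≠ G.dist y w

/-- The metric dimension: the least cardinality of a (finite) resolving set. -/
noncomputable def metricDim {V : Type*} (G : SimpleGraph V) : ℕ :=
  sInf {k | ∃ W : Finset V, IsResolving G ↑W ∧ W.card = k}

/-- The independent metric dimension: the least cardinality of a (finite)
resolving set that is also an independent set. -/
noncomputable def indepMetricDim {V : Type*} (G : SimpleGraph V) : ℕ :=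
  sInf {k | ∃ W : Finset V, IsResolving G ↑W ∧
    (∀ a ∈ W, ∀ b ∈ W, ¬ G.Adj a b) ∧ W.card = k}

namespace SpiderAux

abbrev SpV (ι : Type*) := Option ι ⊕ ι

def spider (ι : Type*) : SimpleGraph (SpV ι) where
  Adj x y := ∃ i, (x = Sum.inl none ∧ y = Sum.inr i) ∨ (x = Sum.inr i ∧ y = Sum.inl none) ∨
    (x = Sum.inl (some i) ∧ y = Sum.inr i) ∨ (x = Sum.inr i ∧ y = Sum.inl (some i))
  symm := by constructor; rintro x y ⟨i, h⟩; exact ⟨i, by tauto⟩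
  loopless := by
    constructor
    rintro x ⟨i, (⟨h1, h2⟩|⟨h1, h2⟩|⟨h1, h2⟩|⟨h1, h2⟩)⟩ <;> subst h1 <;> simp_all

variable {ι : Type*} [DecidableEq ι]

def D : SpV ι → SpV ι → ℕ
  | Sum.inl none, Sum.inl none => 0
  | Sum.inl none, Sum.inl (some _) => 2
  | Sum.inl none, Sum.inr _ => 1
  | Sum.inl (some _), Sum.inl none => 2
  | Sum.inl (some i), Sum.inl (some j) => if i = j then 0 else 4
  | Sum.inl (some i), Sum.inr j => if i = j then 1 else 3
  | Sum.inr _, Sum.inl none => 1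
  | Sum.inr i, Sum.inl (some j) => if i = j then 1 else 3
  | Sum.inr i, Sum.inr j => if i = j then 0 else 2

lemma adj_ce (i : ι) : (spider ι).Adj (Sum.inl none) (Sum.inr i) := ⟨i, by tauto⟩
lemma adj_el (i : ι) : (spider ι).Adj (Sum.inr i) (Sum.inl (some i)) := ⟨i, by tauto⟩

def w1 (i : ι) : (spider ι).Walk (Sum.inl none) (Sum.inr i) := (adj_ce i).toWalk
def w2 (i : ι) : (spider ι).Walk (Sum.inl none) (Sum.inl (some i)) :=
  Walk.cons (adj_ce i) (adj_el i).toWalk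
def w3 (i j : ι) : (spider ι).Walk (Sum.inr i) (Sum.inr j) :=
  Walk.cons (adj_ce i).symm (w1 j)
def w4 (i j : ι) : (spider ι).Walk (Sum.inr i) (Sum.inl (some j)) :=
  Walk.cons (adj_ce i).symm (w2 j)
def w5 (i j : ι) : (spider ι).Walk (Sum.inl (some i)) (Sum.inl (some j)) :=
  Walk.cons (adj_el i).symm (w4 i j)

@[simp] lemma w1_len (i : ι) : (w1 i).length = 1 := rfl
@[simp] lemma w2_len (i : ι) : (w2 i).length = 2 := rfl
@[simp] lemma w3_len (i j : ι) : (w3 i j).length = 2 := rfl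
@[simp] lemma w4_len (i j : ι) : (w4 i j).length = 3 := rfl
@[simp] lemma w5_len (i j : ι) : (w5 i j).length = 4 := rfl

lemma reachable_all (x y : SpV ι) : (spider ι).Reachable x y := by
  rcases x with (_|i)|i <;> rcases y with (_|j)|j
  · exact Reachable.refl _
  · exact ⟨w2 j⟩
  · exact ⟨w1 j⟩
  · exact ⟨(w2 i).reverse⟩
  · exact ⟨w5 i j⟩
  · exact ⟨(w4 j i).reverse⟩
  · exact ⟨(w1 i).reverse⟩
  · exact ⟨w4 i j⟩
  · exact ⟨w3 i j⟩

lemma D_self (x : SpV ι) : D x x = 0 := by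
  rcases x with (_|i)|i <;> simp [D]

lemma dist_le_D (x y : SpV ι) : (spider ι).dist x y ≤ D x y := by
  rcases x with (_|i)|i <;> rcases y with (_|j)|j
  · simp [D_self, SimpleGraph.dist_self]
  · exact (dist_le (w2 j)).trans (by simp [D])
  · exact (dist_le (w1 j)).trans (by simp [D])
  · exact (dist_le (w2 i).reverse).trans (by simp [D])
  · by_cases h : i = j
    · subst h; simp [D_self, SimpleGraph.dist_self]
    · exact (dist_le (w5 i j)).trans (by simp [D, h])
  · by_cases h : i = j
    · subst h; exact (dist_le (adj_el i).symm.toWalk).trans (by simp [D])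
    · exact (dist_le ((w4 j i).reverse)).trans (by simp [D, h])
  · exact (dist_le (w1 i).reverse).trans (by simp [D])
  · by_cases h : i = j
    · subst h; exact (dist_le (adj_el i).toWalk).trans (by simp [D])
    · exact (dist_le (w4 i j)).trans (by simp [D, h])
  · by_cases h : i = j
    · subst h; simp [D_self, SimpleGraph.dist_self]
    · exact (dist_le (w3 i j)).trans (by simp [D, h])

lemma D_adj_le {x y : SpV ι} (h : (spider ι).Adj x y) (w : SpV ι) :
    D x w ≤ D y w + 1 := by
  rcases h with ⟨i, (⟨h1, h2⟩|⟨h1, h2⟩|⟨h1, h2⟩|⟨h1, h2⟩)⟩ <;> subst h1 <;> subst h2 <;>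
    rcases w with (_|k)|k <;> simp [D] <;> split_ifs <;> simp_all

lemma D_le_length {x w : SpV ι} (p : (spider ι).Walk x w) : D x w ≤ p.length := by
  induction p with
  | nil => simp [D_self]
  | cons h p ih =>
    refine (D_adj_le h _).trans ?_
    simpa [SimpleGraph.Walk.length_cons] using Nat.add_le_add_right ih 1

lemma dist_eq_D (x y : SpV ι) : (spider ι).dist x y = D x y := by
  refine le_antisymm (dist_le_D x y) ?_
  obtain ⟨p, hp⟩ := (reachable_all x y).exists_walk_length_eq_dist
  rw [← hp]
  exact D_le_length p


variable [Fintype ι]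

lemma resolve_key [Nontrivial ι] (i₀ : ι) (x y : SpV ι) (hxy : x ≠ y) :
    ∃ i, i ≠ i₀ ∧ D x (Sum.inl (some i)) ≠ D y (Sum.inl (some i)) := by
  have hany : ∃ i : ι, i ≠ i₀ := exists_ne i₀
  rcases x with (_|j)|j <;> rcases y with (_|k)|k
  · exact absurd rfl hxy
  · obtain ⟨i, hi⟩ := hany
    exact ⟨i, hi, by simp [D]; split_ifs <;> simp_all⟩
  · obtain ⟨i, hi⟩ := hany
    exact ⟨i, hi, by simp [D]; split_ifs <;> simp_all⟩
  · obtain ⟨i, hi⟩ := hany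
    exact ⟨i, hi, by simp [D]; split_ifs <;> simp_all⟩
  · have hjk : j ≠ k := by rintro rfl; exact hxy rfl
    refine ⟨if j = i₀ then k else j, ?_, ?_⟩
    · split_ifs with h
      · subst h; exact hjk.symm
      · exact h
    · simp [D]; split_ifs <;> simp_all <;> by_cases hj : j = i₀ <;> simp_all
  · obtain ⟨i, hi⟩ := hany
    exact ⟨i, hi, by simp [D]; split_ifs <;> simp_all⟩
  · obtain ⟨i, hi⟩ := hany
    exact ⟨i, hi, by simp [D]; split_ifs <;> simp_all⟩
  · obtain ⟨i, hi⟩ := hany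
    exact ⟨i, hi, by simp [D]; split_ifs <;> simp_all⟩
  · have hjk : j ≠ k := by rintro rfl; exact hxy rfl
    refine ⟨if j = i₀ then k else j, ?_, ?_⟩
    · split_ifs with h
      · subst h; exact hjk.symm
      · exact h
    · simp [D]; split_ifs <;> simp_all <;> by_cases hj : j = i₀ <;> simp_all

lemma spider_upper [Nontrivial ι] :
    ∃ W : Finset (SpV ι), IsResolving (spider ι) ↑W ∧ W.card = Fintype.card ι - 1 := by
  obtain ⟨i₀⟩ : Nonempty ι := inferInstance
  refine ⟨(Finset.univ.erase i₀).image (fun i => (Sum.inl (some i) : SpV ι)), ?_, ?_⟩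
  · intro x y hxy
    obtain ⟨i, hi, hd⟩ := resolve_key i₀ x y hxy
    refine ⟨Sum.inl (some i), ?_, ?_⟩
    · simp only [Finset.coe_image, Set.mem_image, Finset.mem_coe, Finset.mem_erase]
      exact ⟨i, ⟨hi, Finset.mem_univ i⟩, rfl⟩
    · rwa [dist_eq_D, dist_eq_D]
  · rw [Finset.card_image_of_injective _ (fun a b h => by simpa using h),
      Finset.card_erase_of_mem (Finset.mem_univ i₀), Finset.card_univ]

lemma spider_lower (W : Finset (SpV ι)) (h : IsResolving (spider ι) ↑W) :
    Fintype.card ι - 1 ≤ W.card := by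
  classical
  set S : Finset ι := Finset.univ.filter
    (fun i : ι => (Sum.inr i : SpV ι) ∈ W ∨ (Sum.inl (some i) : SpV ι) ∈ W) with hSdef
  have hSc : Sᶜ.card ≤ 1 := by
    rw [Finset.card_le_one]
    intro i hi j hj
    by_contra hne
    simp only [hSdef, Finset.mem_compl, Finset.mem_filter, Finset.mem_univ, true_and,
      not_or] at hi hj
    obtain ⟨w, hw, hd⟩ := h (Sum.inr i) (Sum.inr j) (by simpa)
    rw [dist_eq_D, dist_eq_D] at hd
    rcases w with (_|k)|k
    · simp [D] at hd
    · have hki : k ≠ i := by rintro rfl; exact hi.2 hw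
      have hkj : k ≠ j := by rintro rfl; exact hj.2 hw
      simp [D, hki.symm, hkj.symm] at hd
    · have hki : k ≠ i := by rintro rfl; exact hi.1 hw
      have hkj : k ≠ j := by rintro rfl; exact hj.1 hw
      simp [D, hki.symm, hkj.symm] at hd
  have hScard : Fintype.card ι - 1 ≤ S.card := by
    have := Finset.card_compl S
    omega
  refine hScard.trans ?_
  refine Finset.card_le_card_of_injOn
    (fun i => if (Sum.inr i : SpV ι) ∈ W then Sum.inr i else Sum.inl (some i)) ?_ ?_
  · intro i hi
    simp only [hSdef, Finset.mem_filter] at hi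
    dsimp only
    split_ifs with hmem
    · exact hmem
    · simp only [Finset.mem_coe, Finset.mem_filter, Finset.mem_univ, true_and] at hi ⊢; tauto
  · intro i _ j _ heq
    dsimp only at heq
    split_ifs at heq <;> simp_all

theorem spider_dim [Nontrivial ι] : metricDim (spider ι) = Fintype.card ι - 1 := by
  obtain ⟨W, hW, hc⟩ := spider_upper (ι := ι)
  refine le_antisymm (Nat.sInf_le ⟨W, hW, hc⟩) (le_csInf ⟨_, W, hW, hc⟩ ?_)
  rintro k ⟨W', hW', rfl⟩
  exact spider_lower W' hW'

end SpiderAux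
section IsoTransfer

variable {V V' : Type*} {G : SimpleGraph V} {G' : SimpleGraph V'}

lemma iso_dist_le (e : G ≃g G') (x y : V) : G'.dist (e x) (e y) ≤ G.dist x y := by
  by_cases h : G.Reachable x y
  · obtain ⟨p, hp⟩ := h.exists_walk_length_eq_dist
    calc G'.dist (e x) (e y) ≤ (p.map e.toHom).length := dist_le _
      _ = G.dist x y := by rw [SimpleGraph.Walk.length_map, hp]
  · have h' : ¬ G'.Reachable (e x) (e y) := fun h' => h (by
      have := h'.map e.symm.toHom
      simpa using this)
    simp [SimpleGraph.dist_eq_zero_of_not_reachable h']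

lemma iso_dist_eq (e : G ≃g G') (x y : V) : G'.dist (e x) (e y) = G.dist x y := by
  refine le_antisymm (iso_dist_le e x y) ?_
  have := iso_dist_le e.symm (e x) (e y)
  simpa using this

lemma isResolving_image [DecidableEq V'] (e : G ≃g G') {W : Finset V}
    (h : IsResolving G ↑W) : IsResolving G' ↑(W.image e) := by
  intro x y hxy
  obtain ⟨w, hw, hd⟩ := h (e.symm x) (e.symm y)
    (fun hc => hxy (by simpa using congrArg e hc))
  refine ⟨e w, Finset.mem_coe.mpr (Finset.mem_image_of_mem _ hw), ?_⟩
  have h1 : G'.dist x (e w) = G.dist (e.symm x) w := by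
    conv_lhs => rw [← e.apply_symm_apply x]
    exact iso_dist_eq e _ _
  have h2 : G'.dist y (e w) = G.dist (e.symm y) w := by
    conv_lhs => rw [← e.apply_symm_apply y]
    exact iso_dist_eq e _ _
  rw [h1, h2]; exact hd

lemma metricDim_congr (e : G ≃g G') : metricDim G = metricDim G' := by
  classical
  unfold metricDim
  congr 1
  ext k
  constructor
  · rintro ⟨W, hW, rfl⟩
    exact ⟨W.image e, isResolving_image e hW,
      Finset.card_image_of_injective _ (RelIso.injective e)⟩
  · rintro ⟨W, hW, rfl⟩
    exact ⟨W.image e.symm, isResolving_image e.symm hW,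
      Finset.card_image_of_injective _ (RelIso.injective e.symm)⟩

end IsoTransfer

namespace ZDAux

variable {q : ℕ} (hq : q.Prime) (hco : Nat.Coprime 2 q)

noncomputable def φ : ZMod (2*q) ≃+* ZMod 2 × ZMod q := ZMod.chineseRemainder hco

lemma two_cases (x : ZMod 2) : x = 0 ∨ x = 1 := by revert x; decide

lemma symm_ne_zero (u : ZMod 2 × ZMod q) (hu : u ≠ 0) : (φ hco).symm u ≠ 0 := by
  intro h
  apply hu
  have := congrArg (φ hco) h
  rwa [RingEquiv.apply_symm_apply, map_zero] at this

noncomputable def cvert : ZDVert (2*q) :=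
  ⟨(φ hco).symm (1, 0), by
    haveI := Fact.mk hq
    refine ⟨symm_ne_zero hco _ (by simp), (φ hco).symm (0, 1), symm_ne_zero hco _ (by simp), ?_⟩
    rw [← map_mul]
    convert map_zero (φ hco).symm using 2
    simp [Prod.ext_iff]⟩

noncomputable def lvert (y : ZMod q) (hy : y ≠ 0) : ZDVert (2*q) :=
  ⟨(φ hco).symm (0, y), by
    refine ⟨symm_ne_zero hco _ (by simp [Prod.ext_iff, hy]),
      (φ hco).symm (1, 0), symm_ne_zero hco _ (by simp), ?_⟩
    rw [← map_mul]
    convert map_zero (φ hco).symm using 2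
    simp [Prod.ext_iff]⟩

lemma cvert_val : (φ hco) (cvert hq hco).1 = (1, 0) := by
  simp [cvert, φ]

lemma lvert_val (y : ZMod q) (hy : y ≠ 0) : (φ hco) (lvert hco y hy).1 = (0, y) := by
  simp [lvert, φ]

lemma cvert_ne_lvert (y : ZMod q) (hy : y ≠ 0) : cvert hq hco ≠ lvert hco y hy := by
  intro h
  have := congrArg (fun a : ZDVert (2*q) => (φ hco) a.1) h
  simp only [cvert_val, lvert_val] at this
  have h1 := congrArg Prod.fst this
  simp at h1

lemma lvert_inj {y y' : ZMod q} {hy : y ≠ 0} {hy' : y' ≠ 0}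
    (h : lvert hco y hy = lvert hco y' hy') : y = y' := by
  have := congrArg (fun a : ZDVert (2*q) => (φ hco) a.1) h
  simp only [lvert_val] at this
  exact congrArg Prod.snd this

lemma classify (a : ZDVert (2*q)) :
    a = cvert hq hco ∨ ∃ (y : ZMod q) (hy : y ≠ 0), a = lvert hco y hy := by
  haveI := Fact.mk hq
  obtain ⟨a0, ha0, b, hb, hab⟩ := a
  have hφa : (φ hco) a0 ≠ 0 := fun h => ha0 ((φ hco).injective (by simpa using h))
  have hprod : (φ hco) a0 * (φ hco) b = 0 := by rw [← map_mul, hab, map_zero]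
  rcases two_cases ((φ hco) a0).1 with h1 | h1
  · -- second component nonzero
    have h2 : ((φ hco) a0).2 ≠ 0 := by
      intro h2
      exact hφa (Prod.ext h1 h2)
    right
    refine ⟨((φ hco) a0).2, h2, ?_⟩
    apply Subtype.ext
    show a0 = _
    apply (φ hco).injective
    rw [lvert_val]
    exact Prod.ext h1 rfl
  · -- first component is 1; second must be 0
    have h2 : ((φ hco) a0).2 = 0 := by
      by_contra h2
      apply hb
      apply (φ hco).injective
      rw [map_zero]
      have hu : ((φ hco) a0).1 * ((φ hco) b).1 = 0 := congrArg Prod.fst hprod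
      have hv : ((φ hco) a0).2 * ((φ hco) b).2 = 0 := congrArg Prod.snd hprod
      rw [h1, one_mul] at hu
      have hv' : ((φ hco) b).2 = 0 := by
        rcases mul_eq_zero.mp hv with h | h
        · exact absurd h h2
        · exact h
      exact Prod.ext hu hv'
    left
    apply Subtype.ext
    show a0 = _
    apply (φ hco).injective
    rw [cvert_val]
    exact Prod.ext h1 h2

lemma adj_iff (a b : ZDVert (2*q)) :
    (zdGraph (2*q)).Adj a b ↔
      (a = cvert hq hco ∧ ∃ (y : ZMod q) (hy : y ≠ 0), b = lvert hco y hy) ∨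
      (b = cvert hq hco ∧ ∃ (y : ZMod q) (hy : y ≠ 0), a = lvert hco y hy) := by
  haveI := Fact.mk hq
  constructor
  · rintro ⟨hne, hmul⟩
    have hprod : (φ hco) a.1 * (φ hco) b.1 = 0 := by rw [← map_mul, hmul, map_zero]
    rcases classify hq hco a with ha | ⟨y, hy, ha⟩ <;> rcases classify hq hco b with hb | ⟨y', hy', hb⟩
    · exact absurd (ha.trans hb.symm) hne
    · exact Or.inl ⟨ha, y', hy', hb⟩
    · exact Or.inr ⟨hb, y, hy, ha⟩
    · exfalso
      subst ha; subst hb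
      rw [lvert_val, lvert_val] at hprod
      have := congrArg Prod.snd hprod
      simp only [Prod.snd_mul, Prod.snd_zero] at this
      exact (mul_ne_zero hy hy') this
  · rintro (⟨ha, y, hy, hb⟩ | ⟨hb, y, hy, ha⟩) <;> subst ha <;> subst hb
    · refine ⟨cvert_ne_lvert hq hco y hy, ?_⟩
      apply (φ hco).injective
      rw [map_mul, map_zero, cvert_val, lvert_val]
      simp [Prod.ext_iff]
    · refine ⟨(cvert_ne_lvert hq hco y hy).symm, ?_⟩
      apply (φ hco).injective
      rw [map_mul, map_zero, cvert_val, lvert_val]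
      simp [Prod.ext_iff]

end ZDAux

namespace ZDAux

variable {q : ℕ} (hq : q.Prime) (hco : Nat.Coprime 2 q)

local notation "ιq" => {y : ZMod q // y ≠ 0}

noncomputable def vEquiv : Option ιq ≃ ZDVert (2*q) :=
  Equiv.ofBijective
    (fun o => match o with
      | none => cvert hq hco
      | some y => lvert hco y.1 y.2)
    (by
      constructor
      · rintro (_|y) (_|y') h
        · rfl
        · exact absurd h (cvert_ne_lvert hq hco y'.1 y'.2)
        · exact absurd h.symm (cvert_ne_lvert hq hco y.1 y.2)
        · exact congrArg some (Subtype.ext (lvert_inj hco h))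
      · intro a
        rcases classify hq hco a with ha | ⟨y, hy, ha⟩
        · exact ⟨none, ha.symm⟩
        · exact ⟨some ⟨y, hy⟩, ha.symm⟩)

lemma vEquiv_none : vEquiv hq hco none = cvert hq hco := rfl
lemma vEquiv_some (y : ιq) : vEquiv hq hco (some y) = lvert hco y.1 y.2 := rfl

noncomputable def eEquiv : ιq ≃ (zdGraph (2*q)).edgeSet :=
  Equiv.ofBijective
    (fun y => ⟨s(cvert hq hco, lvert hco y.1 y.2), by
      rw [SimpleGraph.mem_edgeSet, adj_iff hq hco]
      exact Or.inl ⟨rfl, y.1, y.2, rfl⟩⟩)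
    (by
      constructor
      · intro y y' h
        have h' := Subtype.ext_iff.mp h
        simp only [Sym2.congr_right] at h'
        exact Subtype.ext (lvert_inj hco h')
      · rintro ⟨e, he⟩
        induction e using Sym2.ind with
        | _ a b =>
          rw [SimpleGraph.mem_edgeSet, adj_iff hq hco] at he
          rcases he with ⟨ha, y, hy, hb⟩ | ⟨hb, y, hy, ha⟩
          · exact ⟨⟨y, hy⟩, Subtype.ext (by subst ha; subst hb; rfl)⟩
          · exact ⟨⟨y, hy⟩, Subtype.ext (by subst ha; subst hb; exact Sym2.eq_swap)⟩)

lemma eEquiv_val (y : ιq) :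
    (eEquiv hq hco y).1 = s(cvert hq hco, lvert hco y.1 y.2) := rfl

lemma BS_adj_inl_inr {V : Type*} {G : SimpleGraph V} (v : V) (e : G.edgeSet) :
    (BS G).Adj (Sum.inl v) (Sum.inr e) ↔ v ∈ e.1 := by
  constructor
  · rintro (⟨v', e', h1, h2, h⟩ | ⟨v', e', h1, h2, h⟩) <;> simp_all
  · intro h; exact Or.inl ⟨v, e, rfl, rfl, h⟩

lemma BS_adj_inr_inl {V : Type*} {G : SimpleGraph V} (v : V) (e : G.edgeSet) :
    (BS G).Adj (Sum.inr e) (Sum.inl v) ↔ v ∈ e.1 := by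
  rw [(BS G).adj_comm]
  exact BS_adj_inl_inr v e

lemma BS_adj_inl_inl {V : Type*} {G : SimpleGraph V} (v v' : V) :
    ¬ (BS G).Adj (Sum.inl v) (Sum.inl v') := by
  rintro (⟨a, b, h1, h2, h⟩ | ⟨a, b, h1, h2, h⟩) <;> simp_all

lemma BS_adj_inr_inr {V : Type*} {G : SimpleGraph V} (e e' : G.edgeSet) :
    ¬ (BS G).Adj (Sum.inr e) (Sum.inr e') := by
  rintro (⟨a, b, h1, h2, h⟩ | ⟨a, b, h1, h2, h⟩) <;> simp_all

lemma spider_adj_inl_inr {ι : Type*} [DecidableEq ι] (o : Option ι) (i : ι) :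
    (SpiderAux.spider ι).Adj (Sum.inl o) (Sum.inr i) ↔ (o = none ∨ o = some i) := by
  constructor
  · rintro ⟨j, (⟨h1, h2⟩|⟨h1, h2⟩|⟨h1, h2⟩|⟨h1, h2⟩)⟩ <;> simp_all
  · rintro (rfl | rfl)
    · exact SpiderAux.adj_ce i
    · exact (SpiderAux.adj_el i).symm

lemma spider_adj_inr_inl {ι : Type*} [DecidableEq ι] (o : Option ι) (i : ι) :
    (SpiderAux.spider ι).Adj (Sum.inr i) (Sum.inl o) ↔ (o = none ∨ o = some i) := by
  rw [(SpiderAux.spider ι).adj_comm]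
  exact spider_adj_inl_inr o i

lemma spider_adj_inl_inl {ι : Type*} (o o' : Option ι) :
    ¬ (SpiderAux.spider ι).Adj (Sum.inl o) (Sum.inl o') := by
  rintro ⟨j, (⟨h1, h2⟩|⟨h1, h2⟩|⟨h1, h2⟩|⟨h1, h2⟩)⟩ <;> simp_all

lemma spider_adj_inr_inr {ι : Type*} (i i' : ι) :
    ¬ (SpiderAux.spider ι).Adj (Sum.inr i) (Sum.inr i') := by
  rintro ⟨j, (⟨h1, h2⟩|⟨h1, h2⟩|⟨h1, h2⟩|⟨h1, h2⟩)⟩ <;> simp_all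

lemma mem_key (o : Option ιq) (i : ιq) :
    vEquiv hq hco o ∈ (eEquiv hq hco i).1 ↔ (o = none ∨ o = some i) := by
  rw [eEquiv_val, Sym2.mem_iff]
  constructor
  · rintro (h | h)
    · left
      exact (vEquiv hq hco).injective (by rw [h, vEquiv_none])
    · right
      exact (vEquiv hq hco).injective (by rw [h, vEquiv_some])
  · rintro (rfl | rfl)
    · exact Or.inl (vEquiv_none hq hco)
    · exact Or.inr (vEquiv_some hq hco i)

noncomputable def spiderIso :
    SpiderAux.spider ιq ≃g BS (zdGraph (2*q)) := by
  refine ⟨Equiv.sumCongr (vEquiv hq hco) (eEquiv hq hco), ?_⟩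
  rintro (o|i) (o'|i') <;>
    simp only [Equiv.sumCongr_apply, Sum.map_inl, Sum.map_inr]
  · rw [iff_false_intro (BS_adj_inl_inl _ _), iff_false_intro (spider_adj_inl_inl o o')]
  · rw [BS_adj_inl_inr, spider_adj_inl_inr, mem_key]
  · rw [BS_adj_inr_inl, spider_adj_inr_inl, mem_key]
  · rw [iff_false_intro (BS_adj_inr_inr _ _), iff_false_intro (spider_adj_inr_inr i i')]

end ZDAux

theorem stmt0 (q : ℕ) (hq : q.Prime) (hq2 : 2 < q) :
    metricDim (BS (zdGraph (2 * q))) = q - 2 := by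
  haveI := Fact.mk hq
  haveI : NeZero q := ⟨hq.ne_zero⟩
  have hco : Nat.Coprime 2 q := Nat.coprime_two_left.mpr (hq.odd_of_ne_two (by omega))
  have hcard : Fintype.card {y : ZMod q // y ≠ 0} = q - 1 := by
    have h1 := Fintype.card_subtype_compl (fun y : ZMod q => y = 0)
    rw [Fintype.card_subtype_eq (0 : ZMod q), ZMod.card] at h1
    exact h1
  haveI : Nontrivial {y : ZMod q // y ≠ 0} := by
    rw [← Fintype.one_lt_card_iff_nontrivial, hcard]
    omega
  rw [← metricDim_congr (ZDAux.spiderIso hq hco), SpiderAux.spider_dim, hcard]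
  omega
end

section
/- Let p and q be distinct odd primes with p ≥ 5 and q ≥ 2p - 1, and let n = pq. Then the metric dimension of the barycentric subdivision of the zero divisor graph of Z_n equals q - 2, i.e. dim(BS(Γ(Z_{pq}))) = q - 2. -/
open SimpleGraph

section Generic
variable {V' : Type*} {H : SimpleGraph V'}

lemma walk_parity (c : V' → Bool) (hc : ∀ a b, H.Adj a b → c a ≠ c b)
    {x y : V'} (w : H.Walk x y) : (Even w.length ↔ c x = c y) := by
  induction w with
  | nil => simp
  | @cons u v z h p ih =>
    have hne := hc _ _ h
    simp only [Walk.length_cons, Nat.even_add_one, ih]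
    cases hcu : c u <;> cases hcv : c v <;> cases hcz : c z <;> simp_all

lemma dist_parity (c : V' → Bool) (hc : ∀ a b, H.Adj a b → c a ≠ c b)
    {x y : V'} (w : H.Walk x y) : (Even (H.dist x y) ↔ Even w.length) := by
  obtain ⟨p, hp⟩ := (Reachable.exists_walk_length_eq_dist ⟨w⟩)
  rw [← hp, walk_parity c hc p, walk_parity c hc w]

lemma exists_mid {x y : V'} (h : H.dist x y = 2) : ∃ z, H.Adj x z ∧ H.Adj z y := by
  obtain ⟨p, hp⟩ := exists_walk_of_dist_ne_zero (G := H) (u := x) (v := y) (by omega)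
  rw [h] at hp
  cases p with
  | nil => simp at hp
  | cons hadj q =>
    cases q with
    | nil => simp at hp
    | cons hadj2 r =>
      simp only [Walk.length_cons] at hp
      have hr : r.length = 0 := by omega
      have := Walk.eq_of_length_eq_zero hr
      subst this
      exact ⟨_, hadj, hadj2⟩

lemma dist_eq_two' {x y : V'} (hne : x ≠ y) (hnadj : ¬H.Adj x y) {z : V'}
    (h1 : H.Adj x z) (h2 : H.Adj z y) : H.dist x y = 2 := by
  have hle := H.dist_le (Walk.cons h1 (Walk.cons h2 Walk.nil))
  simp only [Walk.length_cons, Walk.length_nil] at hle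
  have h0 : H.dist x y ≠ 0 := by
    rw [dist_ne_zero_iff_ne_and_reachable]
    exact ⟨hne, ⟨Walk.cons h1 (Walk.cons h2 Walk.nil)⟩⟩
  have h1' : H.dist x y ≠ 1 := fun h => hnadj (dist_eq_one_iff_adj.mp h)
  omega

lemma dist_eq_three' (c : V' → Bool) (hc : ∀ a b, H.Adj a b → c a ≠ c b)
    {x y : V'} (hnadj : ¬H.Adj x y) {z1 z2 : V'}
    (h1 : H.Adj x z1) (h2 : H.Adj z1 z2) (h3 : H.Adj z2 y) : H.dist x y = 3 := by
  let w : H.Walk x y := Walk.cons h1 (Walk.cons h2 (Walk.cons h3 Walk.nil))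
  have hlen : w.length = 3 := by simp [w]
  have hle := H.dist_le w
  rw [hlen] at hle
  have hpar := dist_parity c hc w
  rw [hlen] at hpar
  have hodd : ¬ Even (H.dist x y) := by
    rw [hpar]; decide
  rw [Nat.not_even_iff] at hodd
  have h1' : H.dist x y ≠ 1 := fun h => hnadj (dist_eq_one_iff_adj.mp h)
  omega

lemma dist_eq_four' (c : V' → Bool) (hc : ∀ a b, H.Adj a b → c a ≠ c b)
    {x y : V'} (hne : x ≠ y) (hno2 : ∀ z, ¬(H.Adj x z ∧ H.Adj z y)) {z1 z2 z3 : V'}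
    (h1 : H.Adj x z1) (h2 : H.Adj z1 z2) (h3 : H.Adj z2 z3) (h4 : H.Adj z3 y) :
    H.dist x y = 4 := by
  let w : H.Walk x y := Walk.cons h1 (Walk.cons h2 (Walk.cons h3 (Walk.cons h4 Walk.nil)))
  have hlen : w.length = 4 := by simp [w]
  have hle := H.dist_le w
  rw [hlen] at hle
  have hpar := dist_parity c hc w
  rw [hlen] at hpar
  have heven : Even (H.dist x y) := by rw [hpar]; decide
  have h0 : H.dist x y ≠ 0 := by
    rw [dist_ne_zero_iff_ne_and_reachable]; exact ⟨hne, ⟨w⟩⟩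
  have h2' : H.dist x y ≠ 2 := by
    intro h
    obtain ⟨z, hz1, hz2⟩ := exists_mid h
    exact hno2 z ⟨hz1, hz2⟩
  rw [Nat.even_iff] at heven
  omega

end Generic
section BipBS
open SimpleGraph Sum
variable {V : Type*} {G : SimpleGraph V} {side : V → Bool}

lemma BS_adj_inl_inr {v : V} {e : G.edgeSet} :
    (BS G).Adj (Sum.inl v) (Sum.inr e) ↔ v ∈ e.1 := by
  constructor
  · rintro (⟨v', e', h1, h2, h3⟩ | ⟨v', e', h1, h2, h3⟩)
    · cases h1; cases h2; exact h3
    · cases h1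
  · intro h; exact Or.inl ⟨v, e, rfl, rfl, h⟩

lemma BS_adj_inr_inl {v : V} {e : G.edgeSet} :
    (BS G).Adj (Sum.inr e) (Sum.inl v) ↔ v ∈ e.1 := by
  rw [(BS G).adj_comm]; exact BS_adj_inl_inr

lemma BS_not_adj_inl_inl {u v : V} : ¬ (BS G).Adj (Sum.inl u) (Sum.inl v) := by
  rintro (⟨v', e', h1, h2, h3⟩ | ⟨v', e', h1, h2, h3⟩) <;> cases h1 <;> cases h2

lemma BS_not_adj_inr_inr {e f : G.edgeSet} : ¬ (BS G).Adj (Sum.inr e) (Sum.inr f) := by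
  rintro (⟨v', e', h1, h2, h3⟩ | ⟨v', e', h1, h2, h3⟩) <;> cases h1 <;> cases h2

lemma BS_color : ∀ a b : V ⊕ G.edgeSet, (BS G).Adj a b → a.isRight ≠ b.isRight := by
  rintro a b (⟨v', e', rfl, rfl, h3⟩ | ⟨v', e', rfl, rfl, h3⟩) <;> simp

/-- every edge has one endpoint on each side -/
lemma edge_ends (hadj : ∀ x y, G.Adj x y ↔ side x ≠ side y) (e : G.edgeSet) :
    ∃ a b : V, side a = false ∧ side b = true ∧ e.1 = s(a, b) := by
  obtain ⟨e, he⟩ := e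
  induction e with
  | _ x y =>
    rw [SimpleGraph.mem_edgeSet, hadj] at he
    cases hx : side x <;> cases hy : side y <;> rw [hx, hy] at he <;> try simp at he
    · exact ⟨x, y, hx, hy, rfl⟩
    · exact ⟨y, x, hy, hx, Sym2.eq_swap⟩

lemma mem_edge_side (hadj : ∀ x y, G.Adj x y ↔ side x ≠ side y) {v : V} {e : G.edgeSet} (hv : v ∈ e.1) :
    ∃ u : V, u ∈ e.1 ∧ side u ≠ side v ∧ e.1 = s(v, u) := by
  obtain ⟨a, b, ha, hb, hab⟩ := edge_ends hadj e
  rw [hab] at hv ⊢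
  rw [Sym2.mem_iff] at hv
  rcases hv with rfl | rfl
  · exact ⟨b, by simp, by rw [ha, hb]; simp, rfl⟩
  · exact ⟨a, by simp [Sym2.eq_swap], by rw [ha, hb]; simp, Sym2.eq_swap⟩

/-- two distinct vertices of an edge determine it -/
lemma edge_eq_of_two_mem (hadj : ∀ x y, G.Adj x y ↔ side x ≠ side y) {u v : V} {e : G.edgeSet} (hne : u ≠ v)
    (hu : u ∈ e.1) (hv : v ∈ e.1) : e.1 = s(u, v) := by
  obtain ⟨a, b, _, _, hab⟩ := edge_ends hadj e
  rw [hab] at hu hv ⊢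
  rw [Sym2.mem_iff] at hu hv
  rcases hu with rfl | rfl <;> rcases hv with rfl | rfl
  · exact absurd rfl hne
  · rfl
  · exact Sym2.eq_swap
  · exact absurd rfl hne

end BipBS
section BipBSDist
open SimpleGraph Sum
variable {V : Type*} {G : SimpleGraph V} {side : V → Bool}

lemma BS_dist_mem {v : V} {e : G.edgeSet} (hv : v ∈ e.1) :
    (BS G).dist (Sum.inl v) (Sum.inr e) = 1 :=
  dist_eq_one_iff_adj.mpr (BS_adj_inl_inr.mpr hv)

lemma BS_dist_mem' {v : V} {e : G.edgeSet} (hv : v ∈ e.1) :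
    (BS G).dist (Sum.inr e) (Sum.inl v) = 1 :=
  dist_eq_one_iff_adj.mpr (BS_adj_inr_inl.mpr hv)

lemma BS_dist_inl_inl_opp (hadj : ∀ x y, G.Adj x y ↔ side x ≠ side y)
    {u v : V} (h : side u ≠ side v) :
    (BS G).dist (Sum.inl u) (Sum.inl v) = 2 := by
  have huv : G.Adj u v := (hadj u v).mpr h
  have he : s(u, v) ∈ G.edgeSet := huv
  refine dist_eq_two' ?_ BS_not_adj_inl_inl
    (z := Sum.inr ⟨s(u,v), he⟩) (BS_adj_inl_inr.mpr (by simp)) (BS_adj_inr_inl.mpr (by simp))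
  simp only [ne_eq, Sum.inl.injEq]
  rintro rfl; exact h rfl

lemma BS_dist_inl_inl_same (hadj : ∀ x y, G.Adj x y ↔ side x ≠ side y)
    {u v z : V} (h : side u = side v) (hne : u ≠ v) (hz : side z ≠ side u) :
    (BS G).dist (Sum.inl u) (Sum.inl v) = 4 := by
  have he1 : s(u, z) ∈ G.edgeSet := (hadj u z).mpr (fun hh => hz hh.symm)
  have he2 : s(z, v) ∈ G.edgeSet := (hadj z v).mpr (fun hh => hz (hh.trans h.symm))
  refine dist_eq_four' Sum.isRight BS_color (by simpa using hne) ?_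
    (z1 := Sum.inr ⟨s(u,z), he1⟩) (z2 := Sum.inl z) (z3 := Sum.inr ⟨s(z,v), he2⟩)
    (BS_adj_inl_inr.mpr (by simp)) (BS_adj_inr_inl.mpr (by simp))
    (BS_adj_inl_inr.mpr (by simp)) (BS_adj_inr_inl.mpr (by simp))
  rintro (w | e) ⟨h1, h2⟩
  · exact BS_not_adj_inl_inl h1
  · rw [BS_adj_inl_inr] at h1
    rw [BS_adj_inr_inl] at h2
    have := edge_eq_of_two_mem hadj hne h1 h2
    have hee : s(u, v) ∈ G.edgeSet := this ▸ e.2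
    rw [SimpleGraph.mem_edgeSet, hadj] at hee
    exact hee h

lemma BS_dist_not_mem (hadj : ∀ x y, G.Adj x y ↔ side x ≠ side y)
    {v : V} {e : G.edgeSet} (hv : v ∉ e.1) :
    (BS G).dist (Sum.inl v) (Sum.inr e) = 3 := by
  obtain ⟨a, b, ha, hb, hab⟩ := edge_ends hadj e
  have hnadj : ¬ (BS G).Adj (Sum.inl v) (Sum.inr e) := by rw [BS_adj_inl_inr]; exact hv
  cases hsv : side v with
  | true =>
    have hva : G.Adj v a := (hadj v a).mpr (by rw [hsv, ha]; simp)
    exact dist_eq_three' Sum.isRight BS_color hnadj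
      (z1 := Sum.inr ⟨s(v,a), hva⟩) (z2 := Sum.inl a)
      (BS_adj_inl_inr.mpr (by simp)) (BS_adj_inr_inl.mpr (by simp))
      (BS_adj_inl_inr.mpr (by rw [hab]; simp))
  | false =>
    have hvb : G.Adj v b := (hadj v b).mpr (by rw [hsv, hb]; simp)
    exact dist_eq_three' Sum.isRight BS_color hnadj
      (z1 := Sum.inr ⟨s(v,b), hvb⟩) (z2 := Sum.inl b)
      (BS_adj_inl_inr.mpr (by simp)) (BS_adj_inr_inl.mpr (by simp))
      (BS_adj_inl_inr.mpr (by rw [hab]; simp))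

lemma BS_dist_not_mem' (hadj : ∀ x y, G.Adj x y ↔ side x ≠ side y)
    {v : V} {e : G.edgeSet} (hv : v ∉ e.1) :
    (BS G).dist (Sum.inr e) (Sum.inl v) = 3 := by
  rw [SimpleGraph.dist_comm]; exact BS_dist_not_mem hadj hv

lemma BS_dist_inr_inr_share {e f : G.edgeSet} (hne : e ≠ f) {v : V}
    (hv : v ∈ e.1) (hv' : v ∈ f.1) :
    (BS G).dist (Sum.inr e) (Sum.inr f) = 2 := by
  refine dist_eq_two' (by simpa using hne) BS_not_adj_inr_inr
    (z := Sum.inl v) (BS_adj_inr_inl.mpr hv) (BS_adj_inl_inr.mpr hv')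

lemma BS_dist_inr_inr_disj (hadj : ∀ x y, G.Adj x y ↔ side x ≠ side y)
    {e f : G.edgeSet} (h : ∀ v : V, ¬(v ∈ e.1 ∧ v ∈ f.1)) :
    (BS G).dist (Sum.inr e) (Sum.inr f) = 4 := by
  obtain ⟨a, b, ha, hb, hab⟩ := edge_ends hadj e
  obtain ⟨a', b', ha', hb', hab'⟩ := edge_ends hadj f
  have hm : s(a, b') ∈ G.edgeSet := (hadj a b').mpr (by rw [ha, hb']; simp)
  have hne : e ≠ f := by
    rintro rfl; exact h a ⟨by rw [hab]; simp, by rw [hab]; simp⟩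
  refine dist_eq_four' Sum.isRight BS_color (by simpa using hne) ?_
    (z1 := Sum.inl a) (z2 := Sum.inr ⟨s(a,b'), hm⟩) (z3 := Sum.inl b')
    (BS_adj_inr_inl.mpr (by rw [hab]; simp)) (BS_adj_inl_inr.mpr (by simp))
    (BS_adj_inr_inl.mpr (by simp)) (BS_adj_inl_inr.mpr (by rw [hab']; simp))
  rintro (w | g) ⟨h1, h2⟩
  · rw [BS_adj_inr_inl] at h1
    rw [BS_adj_inl_inr] at h2
    exact h w ⟨h1, h2⟩
  · exact BS_not_adj_inr_inr h1

end BipBSDist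
section LB
open SimpleGraph Sum

lemma iso_dist_le_s2 {V1 V2 : Type*} {H1 : SimpleGraph V1} {H2 : SimpleGraph V2}
    (φ : H1 ≃g H2) (x y : V1) : H2.dist (φ x) (φ y) ≤ H1.dist x y := by
  by_cases hr : H1.Reachable x y
  · obtain ⟨p, hp⟩ := hr.exists_walk_length_eq_dist
    have := H2.dist_le (p.map φ.toHom)
    rwa [Walk.length_map, hp] at this
  · rw [SimpleGraph.dist_eq_zero_of_not_reachable hr]
    rw [SimpleGraph.dist_eq_zero_of_not_reachable]
    intro ⟨w⟩
    apply hr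
    exact ⟨(w.map φ.symm.toHom).copy (φ.symm_apply_apply x) (φ.symm_apply_apply y)⟩

lemma iso_dist_eq_s2 {V1 V2 : Type*} {H1 : SimpleGraph V1} {H2 : SimpleGraph V2}
    (φ : H1 ≃g H2) (x y : V1) : H2.dist (φ x) (φ y) = H1.dist x y := by
  refine le_antisymm (iso_dist_le_s2 φ x y) ?_
  have := iso_dist_le_s2 φ.symm (φ x) (φ y)
  simpa using this

variable {V : Type*} [DecidableEq V] {G : SimpleGraph V} {side : V → Bool}

/-- the swap of two same-side vertices as an automorphism of G -/
def swapIso (hadj : ∀ x y, G.Adj x y ↔ side x ≠ side y) {b b' : V}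
    (hs : side b = side b') : G ≃g G where
  toEquiv := Equiv.swap b b'
  map_rel_iff' := by
    intro x y
    have hside : ∀ v, side (Equiv.swap b b' v) = side v := by
      intro v
      rcases eq_or_ne v b with rfl | h1
      · rw [Equiv.swap_apply_left, hs]
      rcases eq_or_ne v b' with rfl | h2
      · rw [Equiv.swap_apply_right, hs]
      · rw [Equiv.swap_apply_of_ne_of_ne h1 h2]
    simp only [Equiv.coe_fn_mk, hadj, hside]

/-- lift an automorphism of G to its barycentric subdivision -/
def BSIso {G : SimpleGraph V} (φ : G ≃g G) : BS G ≃g BS G where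
  toEquiv := Equiv.sumCongr φ.toEquiv φ.mapEdgeSet
  map_rel_iff' := by
    rintro (v | e) (w | f) <;>
      simp only [Equiv.sumCongr_apply, Sum.map_inl, Sum.map_inr]
    · constructor <;> intro h <;> [exact absurd h BS_not_adj_inl_inl;
        exact absurd h BS_not_adj_inl_inl]
    · rw [BS_adj_inl_inr, BS_adj_inl_inr]
      show φ v ∈ (φ.mapEdgeSet f).1 ↔ _
      have : (φ.mapEdgeSet f).1 = Sym2.map φ f.1 := rfl
      rw [this, Sym2.mem_map]
      constructor
      · rintro ⟨a, ha, haa⟩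
        rwa [← φ.toEquiv.injective haa]
      · intro h; exact ⟨v, h, rfl⟩
    · rw [BS_adj_inr_inl, BS_adj_inr_inl]
      show φ w ∈ (φ.mapEdgeSet e).1 ↔ _
      have : (φ.mapEdgeSet e).1 = Sym2.map φ e.1 := rfl
      rw [this, Sym2.mem_map]
      constructor
      · rintro ⟨a, ha, haa⟩
        rwa [← φ.toEquiv.injective haa]
      · intro h; exact ⟨w, h, rfl⟩
    · constructor <;> intro h <;> [exact absurd h BS_not_adj_inr_inr;
        exact absurd h BS_not_adj_inr_inr]

end LB
section LB2
open SimpleGraph Sum Finset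
variable {V : Type*} [DecidableEq V] [Fintype V] {G : SimpleGraph V} {side : V → Bool}

lemma BSIso_inl (φ : G ≃g G) (v : V) : BSIso φ (Sum.inl v) = Sum.inl (φ v) := rfl
lemma BSIso_inr (φ : G ≃g G) (e : G.edgeSet) :
    BSIso φ (Sum.inr e) = Sum.inr (φ.mapEdgeSet e) := rfl
lemma swapIso_apply (hadj : ∀ x y, G.Adj x y ↔ side x ≠ side y) {b b' : V}
    (hs : side b = side b') (v : V) : swapIso hadj hs v = Equiv.swap b b' v := rfl

lemma lower_bound (hadj : ∀ x y, G.Adj x y ↔ side x ≠ side y)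
    (W : Finset (V ⊕ G.edgeSet)) (hres : IsResolving (BS G) ↑W) :
    (Finset.univ.filter (fun v => side v = true)).card - 1 ≤ W.card := by
  classical
  by_contra hcon
  push_neg at hcon
  set B : Finset V := Finset.univ.filter (fun v => side v = true) with hB
  have hex : ∀ e : G.edgeSet, ∃ v, v ∈ e.1 ∧ side v = true := by
    intro e
    obtain ⟨a, b, _, hb, hab⟩ := edge_ends hadj e
    exact ⟨b, by rw [hab]; simp, hb⟩
  set tf : V ⊕ G.edgeSet → V := Sum.elim id (fun e => (hex e).choose) with htf
  have huniq : ∀ (e : G.edgeSet) (v : V), v ∈ e.1 → side v = true →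
      (hex e).choose = v := by
    intro e v hv hsv
    obtain ⟨hmem, hside⟩ := (hex e).choose_spec
    by_contra hne
    have hee := edge_eq_of_two_mem hadj hne hmem hv
    have : G.Adj (hex e).choose v := by rw [← SimpleGraph.mem_edgeSet, ← hee]; exact e.2
    rw [hadj, hside, hsv] at this
    exact this rfl
  set T : Finset V := W.image tf with hT
  have hcardT : T.card ≤ W.card := Finset.card_image_le
  have hcardU : B.card ≤ (B \ T).card + T.card := by
    rw [Finset.card_sdiff_add_card]
    exact Finset.card_le_card Finset.subset_union_left
  have h2 : 1 < (B \ T).card := by omega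
  obtain ⟨b, hb, b', hb', hbb'⟩ := Finset.one_lt_card.mp h2
  rw [Finset.mem_sdiff] at hb hb'
  have hsb : side b = true := by have := hb.1; rw [hB, Finset.mem_filter] at this; exact this.2
  have hsb' : side b' = true := by
    have := hb'.1; rw [hB, Finset.mem_filter] at this; exact this.2
  have hnotTb : ∀ w ∈ W, tf w ≠ b := by
    intro w hw hne; exact hb.2 (Finset.mem_image.mpr ⟨w, hw, hne⟩)
  have hnotTb' : ∀ w ∈ W, tf w ≠ b' := by
    intro w hw hne; exact hb'.2 (Finset.mem_image.mpr ⟨w, hw, hne⟩)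
  have hs : side b = side b' := by rw [hsb, hsb']
  set Ψ : BS G ≃g BS G := BSIso (swapIso hadj hs) with hΨ
  obtain ⟨w, hwW, hwd⟩ := hres (Sum.inl b) (Sum.inl b') (by simpa using hbb')
  apply hwd
  have hfix : Ψ w = w := by
    rcases w with v | e
    · rw [hΨ, BSIso_inl]
      have h1 : v ≠ b := by
        intro h; exact hnotTb _ hwW (by rw [htf, h]; rfl)
      have h2 : v ≠ b' := by
        intro h; exact hnotTb' _ hwW (by rw [htf, h]; rfl)
      rw [swapIso_apply, Equiv.swap_apply_of_ne_of_ne h1 h2]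
    · rw [hΨ, BSIso_inr]
      congr 1
      have hbe : b ∉ e.1 := by
        intro hmem
        exact hnotTb _ hwW (by rw [htf]; exact huniq e b hmem hsb)
      have hbe' : b' ∉ e.1 := by
        intro hmem
        exact hnotTb' _ hwW (by rw [htf]; exact huniq e b' hmem hsb')
      apply Subtype.ext
      show Sym2.map _ e.1 = e.1
      obtain ⟨a2, b2, ha2, hb2, hab2⟩ := edge_ends hadj e
      have hm1 : a2 ∈ e.1 := by rw [hab2]; simp
      have hm2 : b2 ∈ e.1 := by rw [hab2]; simp
      rw [hab2, Sym2.map_pair_eq]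
      have e1 : Equiv.swap b b' a2 = a2 :=
        Equiv.swap_apply_of_ne_of_ne (fun h => hbe (h ▸ hm1)) (fun h => hbe' (h ▸ hm1))
      have e2 : Equiv.swap b b' b2 = b2 :=
        Equiv.swap_apply_of_ne_of_ne (fun h => hbe (h ▸ hm2)) (fun h => hbe' (h ▸ hm2))
      show s(Equiv.swap b b' a2, Equiv.swap b b' b2) = _
      rw [e1, e2]
  have hswapb : Ψ (Sum.inl b) = Sum.inl b' := by
    rw [hΨ, BSIso_inl, swapIso_apply, Equiv.swap_apply_left]
  calc (BS G).dist (Sum.inl b) w = (BS G).dist (Ψ (Sum.inl b)) (Ψ w) :=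
        (iso_dist_eq_s2 Ψ _ _).symm
    _ = (BS G).dist (Sum.inl b') w := by rw [hswapb, hfix]

end LB2
section GoodF
open Finset

lemma exists_good_f {α : Type*} [DecidableEq α] (A S : Finset α)
    (hM : 2 ≤ A.card) (hNS : 2 * A.card ≤ S.card + 2) :
    ∃ f : α → α, (∀ b ∈ S, f b ∈ A) ∧
      (∀ b (_ : b ∈ S), ∃ b' , ∃ _ : b' ∈ S, b' ≠ b ∧ f b' = f b) ∧
      (∀ a ∈ A, ∀ a' ∈ A, a ≠ a' → ∃ b ∈ S, f b = a ∨ f b = a') := by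
  set M := A.card with hMdef
  set K := S.card with hKdef
  have hg : ∀ k : ℕ, k < K → min (k / 2) (M - 2) + 1 < M := by intro k hk; omega
  set g : Fin K → Fin M := fun k => ⟨min (k.1 / 2) (M - 2) + 1, hg k.1 k.2⟩ with hgdef
  set eA : Fin M ≃ {x // x ∈ A} := A.equivFin.symm with heA
  set eS : {x // x ∈ S} ≃ Fin K := S.equivFin with heS
  classical
  set f : α → α := fun v => if h : v ∈ S then (eA (g (eS ⟨v, h⟩))).1
    else (eA ⟨0, by omega⟩).1 with hfdef
  have hfval : ∀ b (h : b ∈ S), f b = (eA (g (eS ⟨b, h⟩))).1 := by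
    intro b h; rw [hfdef]; simp [h]
  have harith : ∀ k : Fin K, ∃ k' : Fin K, k' ≠ k ∧ g k' = g k := by
    intro k
    have hk := k.2
    by_cases h1 : k.1 < 2 * (M - 2)
    · by_cases h2 : k.1 % 2 = 0
      · refine ⟨⟨k.1 + 1, by omega⟩, ?_, ?_⟩
        · intro h; rw [Fin.ext_iff] at h; simp at h; try omega
        · rw [hgdef]; apply Fin.ext; simp; try omega
      · refine ⟨⟨k.1 - 1, by omega⟩, ?_, ?_⟩
        · intro h; rw [Fin.ext_iff] at h; simp at h; try omega
        · rw [hgdef]; apply Fin.ext; simp; try omega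
    · by_cases h2 : k.1 = 2 * (M - 2)
      · refine ⟨⟨k.1 + 1, by omega⟩, ?_, ?_⟩
        · intro h; rw [Fin.ext_iff] at h; simp at h; try omega
        · rw [hgdef]; apply Fin.ext; simp; try omega
      · refine ⟨⟨2 * (M - 2), by omega⟩, ?_, ?_⟩
        · intro h; rw [Fin.ext_iff] at h; simp at h; try omega
        · rw [hgdef]; apply Fin.ext; simp; try omega
  have harith2 : ∀ j : Fin M, j.1 ≠ 0 → ∃ k : Fin K, g k = j := by
    intro j hj
    have hjlt := j.2
    by_cases h1 : j.1 ≤ M - 2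
    · refine ⟨⟨2 * (j.1 - 1), by omega⟩, ?_⟩
      rw [hgdef]; apply Fin.ext; simp; try omega
    · refine ⟨⟨2 * (M - 2), by omega⟩, ?_⟩
      rw [hgdef]; apply Fin.ext; simp; try omega
  refine ⟨f, ?_, ?_, ?_⟩
  · intro b h; rw [hfval b h]; exact (eA _).2
  · intro b hb
    obtain ⟨k', hne, hgk⟩ := harith (eS ⟨b, hb⟩)
    refine ⟨(eS.symm k').1, (eS.symm k').2, ?_, ?_⟩
    · intro h
      apply hne
      have : eS.symm k' = ⟨b, hb⟩ := Subtype.ext h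
      rw [← this, Equiv.apply_symm_apply]
    · rw [hfval _ (eS.symm k').2, hfval b hb]
      have : (⟨(eS.symm k').1, (eS.symm k').2⟩ : {x // x ∈ S}) = eS.symm k' := rfl
      rw [this, Equiv.apply_symm_apply, hgk]
  · intro a ha a' ha' hne
    set j : Fin M := A.equivFin ⟨a, ha⟩ with hj
    set j' : Fin M := A.equivFin ⟨a', ha'⟩ with hj'
    have hjj' : j ≠ j' := by
      intro h
      apply hne
      have := A.equivFin.injective (hj ▸ hj' ▸ h)
      exact congrArg Subtype.val this
    have key : ∀ (b0 : α) (hb0 : b0 ∈ A) (j0 : Fin M), j0 = A.equivFin ⟨b0, hb0⟩ →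
        j0.1 ≠ 0 → ∃ b ∈ S, f b = b0 := by
      intro b0 hb0 j0 hj0 hj0ne
      obtain ⟨k, hk⟩ := harith2 j0 hj0ne
      refine ⟨(eS.symm k).1, (eS.symm k).2, ?_⟩
      rw [hfval _ (eS.symm k).2]
      have : (⟨(eS.symm k).1, (eS.symm k).2⟩ : {x // x ∈ S}) = eS.symm k := rfl
      rw [this, Equiv.apply_symm_apply, hk, hj0, heA]
      rw [Equiv.symm_apply_apply]
    by_cases hz : j.1 = 0
    · have hz' : j'.1 ≠ 0 := by
        intro h; exact hjj' (Fin.ext (by rw [hz, h]))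
      obtain ⟨b, hbS, hfb⟩ := key a' ha' j' hj' hz'
      exact ⟨b, hbS, Or.inr hfb⟩
    · obtain ⟨b, hbS, hfb⟩ := key a ha j hj hz
      exact ⟨b, hbS, Or.inl hfb⟩

end GoodF
section UB
open SimpleGraph Sum Finset

variable {V : Type*} [Fintype V] [DecidableEq V] {G : SimpleGraph V} {side : V → Bool}

lemma upper_bound (hadj : ∀ x y, G.Adj x y ↔ side x ≠ side y)
    (hM : 2 ≤ (Finset.univ.filter (fun v => side v = false)).card)
    (hNM : 2 * (Finset.univ.filter (fun v => side v = false)).card ≤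
      (Finset.univ.filter (fun v => side v = true)).card) :
    ∃ W : Finset (V ⊕ G.edgeSet), IsResolving (BS G) ↑W ∧
      W.card = (Finset.univ.filter (fun v => side v = true)).card - 1 := by
  classical
  set A : Finset V := Finset.univ.filter (fun v => side v = false) with hA
  set B : Finset V := Finset.univ.filter (fun v => side v = true) with hBdef
  have hB4 : 4 ≤ B.card := by omega
  obtain ⟨β, hβB, γ, hγB, hβγ⟩ := Finset.one_lt_card.mp (show 1 < B.card by omega)
  have hsβ : side β = true := (Finset.mem_filter.mp hβB).2
  have hsγ : side γ = true := (Finset.mem_filter.mp hγB).2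
  set B'' : Finset V := B \ {β, γ} with hB''
  have hssub : ({β, γ} : Finset V) ⊆ B := by
    intro x hx; rcases Finset.mem_insert.mp hx with rfl | hx
    · exact hβB
    · rw [Finset.mem_singleton] at hx; exact hx ▸ hγB
  have hcardB'' : B''.card = B.card - 2 := by
    rw [hB'', Finset.card_sdiff_of_subset hssub, Finset.card_insert_of_notMem (by simpa using hβγ),
      Finset.card_singleton]
  obtain ⟨f, hfA, hP2, hP1⟩ := exists_good_f A B'' hM (by omega)
  have hfs : ∀ b ∈ B'', side (f b) = false := fun b hb => (Finset.mem_filter.mp (hfA b hb)).2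
  have hBs : ∀ b ∈ B'', side b = true := fun b hb =>
    (Finset.mem_filter.mp (Finset.mem_sdiff.mp hb).1).2
  have hβB'' : β ∉ B'' := by rw [hB'']; simp
  have hγB'' : γ ∉ B'' := by rw [hB'']; simp
  have hmemB'' : ∀ v, side v = true → v ≠ β → v ≠ γ → v ∈ B'' := by
    intro v hv h1 h2
    rw [hB'', Finset.mem_sdiff]
    refine ⟨Finset.mem_filter.mpr ⟨Finset.mem_univ v, hv⟩, by simp [h1, h2]⟩
  have hedge : ∀ b, b ∈ B'' → s(f b, b) ∈ G.edgeSet := by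
    intro b hb; rw [SimpleGraph.mem_edgeSet, hadj, hfs b hb, hBs b hb]; simp
  -- the witness set
  set We : Finset (V ⊕ G.edgeSet) :=
    B''.attach.image (fun x => Sum.inr (⟨s(f x.1, x.1), hedge x.1 x.2⟩ : G.edgeSet)) with hWe
  set W : Finset (V ⊕ G.edgeSet) := insert (Sum.inl β) We with hW
  have hWβ : Sum.inl β ∈ W := Finset.mem_insert_self _ _
  have hWew : ∀ b (h : b ∈ B''),
      (Sum.inr (⟨s(f b, b), hedge b h⟩ : G.edgeSet) : V ⊕ G.edgeSet) ∈ W := by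
    intro b h
    apply Finset.mem_insert_of_mem
    rw [hWe]
    exact Finset.mem_image.mpr ⟨⟨b, h⟩, Finset.mem_attach _ _, rfl⟩
  have hcardW : W.card = B.card - 1 := by
    rw [hW, Finset.card_insert_of_notMem, hWe, Finset.card_image_of_injOn]
    · rw [Finset.card_attach, hcardB'']; omega
    · intro x _ y _ hxy
      simp only [Sum.inr.injEq, Subtype.mk.injEq, Sym2.eq_iff] at hxy
      rcases hxy with ⟨h1, h2⟩ | ⟨h1, h2⟩
      · exact Subtype.ext h2
      · have h3 := hfs x.1 x.2
        rw [h1, hBs y.1 y.2] at h3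
        simp at h3
    · rw [hWe]
      intro hmem
      obtain ⟨x, _, hx⟩ := Finset.mem_image.mp hmem
      exact absurd hx (by simp)
  refine ⟨W, ?_, hcardW⟩
  -- basic side facts
  have hz0' : ∃ z : V, side z = false := by
    have hpos : 0 < A.card := by omega
    obtain ⟨z, hz⟩ := Finset.card_pos.mp hpos
    exact ⟨z, (Finset.mem_filter.mp hz).2⟩
  obtain ⟨z0, hz0⟩ := hz0'
  have hsne1 : ∀ v b : V, side v = true → b ∈ B'' → v ≠ f b := by
    intro v b hv hb h; rw [h, hfs b hb] at hv; cases hv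
  have hsne2 : ∀ v w : V, side v = false → side w = true → v ≠ w := by
    intro v w hv hw h; rw [h, hw] at hv; cases hv
  have hβneB'' : ∀ b ∈ B'', b ≠ β := by
    intro b hb h; rw [h] at hb; exact hβB'' hb
  have hγneB'' : ∀ b ∈ B'', b ≠ γ := by
    intro b hb h; rw [h] at hb; exact hγB'' hb
  -- distance facts to inl β
  have dββ : (BS G).dist (Sum.inl β) (Sum.inl β) = 0 := SimpleGraph.dist_self
  have dbβ : ∀ v, side v = true → v ≠ β → (BS G).dist (Sum.inl v) (Sum.inl β) = 4 := by
    intro v hv hne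
    exact BS_dist_inl_inl_same hadj (by rw [hv, hsβ]) hne (z := z0) (by rw [hz0, hv]; simp)
  have daβ : ∀ v, side v = false → (BS G).dist (Sum.inl v) (Sum.inl β) = 2 := by
    intro v hv
    exact BS_dist_inl_inl_opp hadj (by rw [hv, hsβ]; simp)
  have hdvβ : ∀ v : V, (BS G).dist (Sum.inl v) (Sum.inl β) = 0 ∨
      (BS G).dist (Sum.inl v) (Sum.inl β) = 2 ∨ (BS G).dist (Sum.inl v) (Sum.inl β) = 4 := by
    intro v
    by_cases h : v = β
    · subst h; exact Or.inl dββ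
    · cases hv : side v
      · exact Or.inr (Or.inl (daβ v hv))
      · exact Or.inr (Or.inr (dbβ v hv h))
  have hdeβ : ∀ e : G.edgeSet, (BS G).dist (Sum.inr e) (Sum.inl β) = 1 ∨
      (BS G).dist (Sum.inr e) (Sum.inl β) = 3 := by
    intro e
    by_cases h : β ∈ e.1
    · exact Or.inl (BS_dist_mem' h)
    · exact Or.inr (BS_dist_not_mem' hadj h)
  -- distances to witness edges
  have dvw1 : ∀ (b : V) (h : b ∈ B'') (v : V), (v = f b ∨ v = b) →
      (BS G).dist (Sum.inl v) (Sum.inr ⟨s(f b, b), hedge b h⟩) = 1 := by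
    intro b h v hv
    exact BS_dist_mem (Sym2.mem_iff.mpr hv)
  have dvw3 : ∀ (b : V) (h : b ∈ B'') (v : V), v ≠ f b → v ≠ b →
      (BS G).dist (Sum.inl v) (Sum.inr ⟨s(f b, b), hedge b h⟩) = 3 := by
    intro b h v h1 h2
    refine BS_dist_not_mem hadj ?_
    rw [Sym2.mem_iff]
    rintro (h | h) <;> [exact h1 h; exact h2 h]
  have dew2 : ∀ (x : G.edgeSet) (b : V) (h : b ∈ B''),
      x ≠ ⟨s(f b, b), hedge b h⟩ → ∀ v, v ∈ x.1 → (v = f b ∨ v = b) →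
      (BS G).dist (Sum.inr x) (Sum.inr ⟨s(f b, b), hedge b h⟩) = 2 := by
    intro x b h hne v hv hv2
    exact BS_dist_inr_inr_share hne hv (Sym2.mem_iff.mpr hv2)
  have dew4 : ∀ (x : G.edgeSet) (ax bx : V), x.1 = s(ax, bx) → ∀ (b : V) (h : b ∈ B''),
      ax ≠ f b → ax ≠ b → bx ≠ f b → bx ≠ b →
      (BS G).dist (Sum.inr x) (Sum.inr ⟨s(f b, b), hedge b h⟩) = 4 := by
    intro x ax bx hx b h h1 h2 h3 h4
    apply BS_dist_inr_inr_disj hadj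
    rintro v ⟨hv1, hv2⟩
    rw [hx, Sym2.mem_iff] at hv1
    have hv2' : v = f b ∨ v = b := Sym2.mem_iff.mp hv2
    rcases hv1 with rfl | rfl <;> rcases hv2' with h' | h' <;>
      [exact h1 h'; exact h2 h'; exact h3 h'; exact h4 h']
  have dew02 : ∀ (x : G.edgeSet) (b : V) (h : b ∈ B''), ∀ v, v ∈ x.1 → (v = f b ∨ v = b) →
      (BS G).dist (Sum.inr x) (Sum.inr ⟨s(f b, b), hedge b h⟩) = 0 ∨
      (BS G).dist (Sum.inr x) (Sum.inr ⟨s(f b, b), hedge b h⟩) = 2 := by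
    intro x b h v hv hv2
    by_cases hx : x = ⟨s(f b, b), hedge b h⟩
    · rw [hx]; exact Or.inl SimpleGraph.dist_self
    · exact Or.inr (dew2 x b h hx v hv hv2)
  -- helper for opposite-side original vertices
  have hopp : ∀ u v : V, side u = false → side v = true →
      ∃ w ∈ W, (BS G).dist (Sum.inl u) w ≠ (BS G).dist (Sum.inl v) w := by
    intro u v hsu hsv
    refine ⟨Sum.inl β, hWβ, ?_⟩
    rw [daβ u hsu]
    by_cases h : v = β
    · subst h; rw [dββ]; omega
    · rw [dbβ v hsv h]; omega
  -- helper: original vertex vs edge vertex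
  have hve : ∀ (u : V) (e : G.edgeSet),
      ∃ w ∈ W, (BS G).dist (Sum.inl u) w ≠ (BS G).dist (Sum.inr e) w := by
    intro u e
    refine ⟨Sum.inl β, hWβ, ?_⟩
    rcases hdvβ u with h | h | h <;> rcases hdeβ e with h2 | h2 <;> omega
  intro x y hxy
  rcases x with u | e <;> rcases y with v | e'
  · -- both original vertices
    have huv : u ≠ v := by simpa using hxy
    cases hsu : side u <;> cases hsv : side v
    · -- both on the A side
      obtain ⟨b, hb, hor⟩ := hP1 u (Finset.mem_filter.mpr ⟨Finset.mem_univ u, hsu⟩)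
        v (Finset.mem_filter.mpr ⟨Finset.mem_univ v, hsv⟩) huv
      rcases hor with hfb | hfb
      · refine ⟨_, hWew b hb, ?_⟩
        rw [dvw1 b hb u (Or.inl hfb.symm),
          dvw3 b hb v (fun h => huv (h.trans hfb).symm) (hsne2 v b hsv (hBs b hb))]
        omega
      · refine ⟨_, hWew b hb, ?_⟩
        rw [dvw1 b hb v (Or.inl hfb.symm),
          dvw3 b hb u (fun h => huv (h.trans hfb)) (hsne2 u b hsu (hBs b hb))]
        omega
    · exact hopp u v hsu hsv
    · obtain ⟨w, h1, h2⟩ := hopp v u hsv hsu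
      exact ⟨w, h1, h2.symm⟩
    · -- both on the B side
      by_cases huβ : u = β
      · refine ⟨Sum.inl β, hWβ, ?_⟩
        rw [huβ, dββ, dbβ v hsv (fun h => huv (by rw [huβ, h]))]
        omega
      · by_cases hvβ : v = β
        · refine ⟨Sum.inl β, hWβ, ?_⟩
          rw [hvβ, dββ, dbβ u hsu huβ]
          omega
        · by_cases huγ : u = γ
          · have hv'' : v ∈ B'' := hmemB'' v hsv hvβ (by rw [← huγ]; exact huv.symm)
            refine ⟨_, hWew v hv'', ?_⟩
            rw [dvw1 v hv'' v (Or.inr rfl), dvw3 v hv'' u (hsne1 u v hsu hv'') huv]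
            omega
          · have hu'' : u ∈ B'' := hmemB'' u hsu huβ huγ
            refine ⟨_, hWew u hu'', ?_⟩
            rw [dvw1 u hu'' u (Or.inr rfl), dvw3 u hu'' v (hsne1 v u hsv hu'') huv.symm]
            omega
  · exact hve u e'
  · obtain ⟨w, h1, h2⟩ := hve v e
    exact ⟨w, h1, h2.symm⟩
  · -- both edge vertices
    have hee : e ≠ e' := by simpa using hxy
    obtain ⟨a1, b1, ha1, hb1, hE1⟩ := edge_ends hadj e
    obtain ⟨a2, b2, ha2, hb2, hE2⟩ := edge_ends hadj e'
    have hm1a : a1 ∈ e.1 := by rw [hE1]; simp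
    have hm1b : b1 ∈ e.1 := by rw [hE1]; simp
    have hm2a : a2 ∈ e'.1 := by rw [hE2]; simp
    have hm2b : b2 ∈ e'.1 := by rw [hE2]; simp
    by_cases h1β : b1 = β
    · by_cases h2β : b2 = β
      · -- both edges end at β; distinct A-ends
        have ha12 : a1 ≠ a2 := by
          rintro rfl
          exact hee (Subtype.ext (by rw [hE1, hE2, h1β, h2β]))
        obtain ⟨b, hb, hor⟩ := hP1 a1 (Finset.mem_filter.mpr ⟨Finset.mem_univ _, ha1⟩)
          a2 (Finset.mem_filter.mpr ⟨Finset.mem_univ _, ha2⟩) ha12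
        rcases hor with hfb | hfb
        · refine ⟨_, hWew b hb, ?_⟩
          have hne : e ≠ ⟨s(f b, b), hedge b hb⟩ := by
            intro h
            have h' := congrArg Subtype.val h
            rw [hE1, h1β, Sym2.eq_iff] at h'
            rcases h' with ⟨-, h2⟩ | ⟨h2, -⟩
            · exact hβneB'' b hb h2.symm
            · exact hsne2 a1 b ha1 (hBs b hb) h2
          rw [dew2 e b hb hne a1 hm1a (Or.inl hfb.symm),
            dew4 e' a2 b2 hE2 b hb (fun h => ha12 (h.trans hfb).symm)
              (hsne2 a2 b ha2 (hBs b hb)) (by rw [h2β]; exact (hsne1 β b hsβ hb))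
              (by rw [h2β]; exact fun h => hβneB'' b hb h.symm)]
          omega
        · refine ⟨_, hWew b hb, ?_⟩
          have hne : e' ≠ ⟨s(f b, b), hedge b hb⟩ := by
            intro h
            have h' := congrArg Subtype.val h
            rw [hE2, h2β, Sym2.eq_iff] at h'
            rcases h' with ⟨-, h2⟩ | ⟨h2, -⟩
            · exact hβneB'' b hb h2.symm
            · exact hsne2 a2 b ha2 (hBs b hb) h2
          rw [dew2 e' b hb hne a2 hm2a (Or.inl hfb.symm),
            dew4 e a1 b1 hE1 b hb (fun h => ha12 (h.trans hfb))
              (hsne2 a1 b ha1 (hBs b hb)) (by rw [h1β]; exact (hsne1 β b hsβ hb))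
              (by rw [h1β]; exact fun h => hβneB'' b hb h.symm)]
          omega
      · -- β ∈ e, β ∉ e'
        refine ⟨Sum.inl β, hWβ, ?_⟩
        rw [BS_dist_mem' (show β ∈ e.1 by rw [hE1, h1β]; simp),
          BS_dist_not_mem' hadj (show β ∉ e'.1 by
            rw [hE2, Sym2.mem_iff]
            rintro (h | h) <;> [exact hsne2 a2 β ha2 hsβ h.symm; exact h2β h.symm])]
        omega
    · by_cases h2β : b2 = β
      · refine ⟨Sum.inl β, hWβ, ?_⟩
        rw [BS_dist_mem' (show β ∈ e'.1 by rw [hE2, h2β]; simp),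
          BS_dist_not_mem' hadj (show β ∉ e.1 by
            rw [hE1, Sym2.mem_iff]
            rintro (h | h) <;> [exact hsne2 a1 β ha1 hsβ h.symm; exact h1β h.symm])]
        omega
      · -- neither edge ends at β
        by_cases h12 : b1 = b2
        · -- same B-end, different A-ends
          have ha12 : a1 ≠ a2 := by
            rintro rfl
            exact hee (Subtype.ext (by rw [hE1, hE2, h12]))
          have hex'' : ∃ b'', ∃ _ : b'' ∈ B'', b'' ≠ b1 ∧ (f b'' = a1 ∨ f b'' = a2) := by
            obtain ⟨b0, hb0, hor⟩ := hP1 a1 (Finset.mem_filter.mpr ⟨Finset.mem_univ _, ha1⟩)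
              a2 (Finset.mem_filter.mpr ⟨Finset.mem_univ _, ha2⟩) ha12
            by_cases hb01 : b0 = b1
            · obtain ⟨b1', hb1', hne', hfeq⟩ := hP2 b0 hb0
              exact ⟨b1', hb1', by rw [← hb01]; exact hne', by rw [hfeq]; exact hor⟩
            · exact ⟨b0, hb0, hb01, hor⟩
          obtain ⟨b'', hb'', hneb, hfor⟩ := hex''
          rcases hfor with hf | hf
          · refine ⟨_, hWew b'' hb'', ?_⟩
            have hne : e ≠ ⟨s(f b'', b''), hedge b'' hb''⟩ := by
              intro h
              have h' := congrArg Subtype.val h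
              rw [hE1, Sym2.eq_iff] at h'
              rcases h' with ⟨-, h2⟩ | ⟨h2, -⟩
              · exact hneb h2.symm
              · exact hsne2 a1 b'' ha1 (hBs b'' hb'') h2
            rw [dew2 e b'' hb'' hne a1 hm1a (Or.inl hf.symm),
              dew4 e' a2 b2 hE2 b'' hb'' (fun h => ha12 (h.trans hf).symm)
                (hsne2 a2 b'' ha2 (hBs b'' hb'')) (hsne1 b2 b'' hb2 hb'')
                (fun h => hneb (by rw [h12]; exact h.symm))]
            omega
          · refine ⟨_, hWew b'' hb'', ?_⟩
            have hne : e' ≠ ⟨s(f b'', b''), hedge b'' hb''⟩ := by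
              intro h
              have h' := congrArg Subtype.val h
              rw [hE2, Sym2.eq_iff] at h'
              rcases h' with ⟨-, h2⟩ | ⟨h2, -⟩
              · exact hneb (h2.symm.trans h12.symm)
              · exact hsne2 a2 b'' ha2 (hBs b'' hb'') h2
            rw [dew2 e' b'' hb'' hne a2 hm2a (Or.inl hf.symm),
              dew4 e a1 b1 hE1 b'' hb'' (fun h => ha12 (h.trans hf))
                (hsne2 a1 b'' ha1 (hBs b'' hb'')) (hsne1 b1 b'' hb1 hb'')
                (fun h => hneb h.symm)]
            omega
        · -- different B-ends, neither is β
          by_cases hA1 : b1 ∈ B'' ∧ f b1 ≠ a2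
          · obtain ⟨hb1'', hfa2⟩ := hA1
            refine ⟨_, hWew b1 hb1'', ?_⟩
            have h4 : (BS G).dist (Sum.inr e') (Sum.inr ⟨s(f b1, b1), hedge b1 hb1''⟩) = 4 :=
              dew4 e' a2 b2 hE2 b1 hb1'' (fun h => hfa2 h.symm)
                (hsne2 a2 b1 ha2 hb1) (hsne1 b2 b1 hb2 hb1'') (fun h => h12 h.symm)
            rcases dew02 e b1 hb1'' b1 hm1b (Or.inr rfl) with h | h <;> omega
          · by_cases hA2 : b2 ∈ B'' ∧ f b2 ≠ a1
            · obtain ⟨hb2'', hfa1⟩ := hA2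
              refine ⟨_, hWew b2 hb2'', ?_⟩
              have h4 : (BS G).dist (Sum.inr e) (Sum.inr ⟨s(f b2, b2), hedge b2 hb2''⟩) = 4 :=
                dew4 e a1 b1 hE1 b2 hb2'' (fun h => hfa1 h.symm)
                  (hsne2 a1 b2 ha1 hb2) (hsne1 b1 b2 hb1 hb2'') h12
              rcases dew02 e' b2 hb2'' b2 hm2b (Or.inr rfl) with h | h <;> omega
            · by_cases ha12 : a1 = a2
              · -- same A-end
                subst ha12
                by_cases hb1'' : b1 ∈ B''
                · by_cases hf1 : f b1 = a1
                  · -- e is the witness edge at b1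
                    have heq : e = ⟨s(f b1, b1), hedge b1 hb1''⟩ :=
                      Subtype.ext (show e.1 = s(f b1, b1) from hE1.trans (by rw [hf1]))
                    refine ⟨_, hWew b1 hb1'', ?_⟩
                    have hne : e' ≠ ⟨s(f b1, b1), hedge b1 hb1''⟩ := by
                      intro h
                      have h' := congrArg Subtype.val h
                      rw [hE2, Sym2.eq_iff] at h'
                      rcases h' with ⟨-, h2⟩ | ⟨-, h2⟩
                      · exact h12 h2.symm
                      · exact hsne1 b2 b1 hb2 hb1'' h2
                    have h0 : (BS G).dist (Sum.inr e) (Sum.inr ⟨s(f b1, b1), hedge b1 hb1''⟩) = 0 := by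
                      rw [heq]; exact SimpleGraph.dist_self
                    rw [h0, dew2 e' b1 hb1'' hne a1 hm2a (Or.inl hf1.symm)]
                    omega
                  · refine ⟨_, hWew b1 hb1'', ?_⟩
                    have hne : e ≠ ⟨s(f b1, b1), hedge b1 hb1''⟩ := by
                      intro h
                      have h' := congrArg Subtype.val h
                      rw [hE1, Sym2.eq_iff] at h'
                      rcases h' with ⟨h2, -⟩ | ⟨h2, -⟩
                      · exact hf1 h2.symm
                      · exact hsne2 a1 b1 ha1 hb1 h2
                    rw [dew2 e b1 hb1'' hne b1 hm1b (Or.inr rfl),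
                      dew4 e' a1 b2 hE2 b1 hb1'' (fun h => hf1 h.symm)
                        (hsne2 a1 b1 ha1 hb1) (hsne1 b2 b1 hb2 hb1'') (fun h => h12 h.symm)]
                    omega
                · -- b1 ∉ B'' so b1 = γ, hence b2 ∈ B''
                  have hb2'' : b2 ∈ B'' := by
                    apply hmemB'' b2 hb2 h2β
                    intro h
                    apply hb1''
                    apply hmemB'' b1 hb1 h1β
                    rw [← h]; exact h12
                  by_cases hf2 : f b2 = a1
                  · have heq : e' = ⟨s(f b2, b2), hedge b2 hb2''⟩ :=
                      Subtype.ext (show e'.1 = s(f b2, b2) from hE2.trans (by rw [hf2]))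
                    refine ⟨_, hWew b2 hb2'', ?_⟩
                    have hne : e ≠ ⟨s(f b2, b2), hedge b2 hb2''⟩ := by
                      intro h
                      have h' := congrArg Subtype.val h
                      rw [hE1, Sym2.eq_iff] at h'
                      rcases h' with ⟨-, h2⟩ | ⟨-, h2⟩
                      · exact h12 h2
                      · exact hsne1 b1 b2 hb1 hb2'' h2
                    have h0 : (BS G).dist (Sum.inr e') (Sum.inr ⟨s(f b2, b2), hedge b2 hb2''⟩) = 0 := by
                      rw [heq]; exact SimpleGraph.dist_self
                    rw [h0, dew2 e b2 hb2'' hne a1 hm1a (Or.inl hf2.symm)]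
                    omega
                  · refine ⟨_, hWew b2 hb2'', ?_⟩
                    have hne : e' ≠ ⟨s(f b2, b2), hedge b2 hb2''⟩ := by
                      intro h
                      have h' := congrArg Subtype.val h
                      rw [hE2, Sym2.eq_iff] at h'
                      rcases h' with ⟨h2, -⟩ | ⟨h2, -⟩
                      · exact hf2 h2.symm
                      · exact hsne2 a1 b2 ha1 hb2 h2
                    rw [dew2 e' b2 hb2'' hne b2 hm2b (Or.inr rfl),
                      dew4 e a1 b1 hE1 b2 hb2'' (fun h => hf2 h.symm)
                        (hsne2 a1 b2 ha1 hb2) (hsne1 b1 b2 hb1 hb2'') h12]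
                    omega
              · -- a1 ≠ a2
                push_neg at hA1 hA2
                by_cases hb2'' : b2 ∈ B''
                · have hf2 : f b2 = a1 := hA2 hb2''
                  obtain ⟨b'', hb'', hneb, hfeq⟩ := hP2 b2 hb2''
                  have hfb'' : f b'' = a1 := hfeq.trans hf2
                  have hne1 : b'' ≠ b1 := by
                    by_cases hb1'' : b1 ∈ B''
                    · intro h
                      apply ha12
                      rw [← hA1 hb1'', ← h, hfb'']
                    · intro h; rw [h] at hb''; exact hb1'' hb''
                  refine ⟨_, hWew b'' hb'', ?_⟩
                  have hne : e ≠ ⟨s(f b'', b''), hedge b'' hb''⟩ := by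
                    intro h
                    have h' := congrArg Subtype.val h
                    rw [hE1, Sym2.eq_iff] at h'
                    rcases h' with ⟨-, h2⟩ | ⟨h2, -⟩
                    · exact hne1 h2.symm
                    · exact hsne2 a1 b'' ha1 (hBs b'' hb'') h2
                  rw [dew2 e b'' hb'' hne a1 hm1a (Or.inl hfb''.symm),
                    dew4 e' a2 b2 hE2 b'' hb'' (fun h => ha12 (by rw [hfb''] at h; exact h.symm))
                      (hsne2 a2 b'' ha2 (hBs b'' hb'')) (hsne1 b2 b'' hb2 hb'')
                      (fun h => hneb h.symm)]
                  omega
                · -- b2 = γ, so b1 ∈ B'' and f b1 = a2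
                  have hb1'' : b1 ∈ B'' := by
                    apply hmemB'' b1 hb1 h1β
                    intro h
                    apply hb2''
                    apply hmemB'' b2 hb2 h2β
                    rw [← h]; exact fun hh => h12 hh.symm
                  have hf1 : f b1 = a2 := hA1 hb1''
                  obtain ⟨b'', hb'', hneb, hfeq⟩ := hP2 b1 hb1''
                  have hfb'' : f b'' = a2 := hfeq.trans hf1
                  have hne2 : b'' ≠ b2 := by
                    intro h; rw [h] at hb''; exact hb2'' hb''
                  refine ⟨_, hWew b'' hb'', ?_⟩
                  have hne : e' ≠ ⟨s(f b'', b''), hedge b'' hb''⟩ := by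
                    intro h
                    have h' := congrArg Subtype.val h
                    rw [hE2, Sym2.eq_iff] at h'
                    rcases h' with ⟨-, h2⟩ | ⟨h2, -⟩
                    · exact hne2 h2.symm
                    · exact hsne2 a2 b'' ha2 (hBs b'' hb'') h2
                  rw [dew2 e' b'' hb'' hne a2 hm2a (Or.inl hfb''.symm),
                    dew4 e a1 b1 hE1 b'' hb'' (fun h => ha12 (by rw [hfb''] at h; exact h))
                      (hsne2 a1 b'' ha1 (hBs b'' hb'')) (hsne1 b1 b'' hb1 hb'')
                      (fun h => hneb h.symm)]
                  omega

end UB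
section Abstract
open SimpleGraph Finset

theorem abstract_metricDim {V : Type*} [Fintype V] [DecidableEq V]
    {G : SimpleGraph V} {side : V → Bool}
    (hadj : ∀ x y, G.Adj x y ↔ side x ≠ side y)
    (hM : 2 ≤ (Finset.univ.filter (fun v => side v = false)).card)
    (hNM : 2 * (Finset.univ.filter (fun v => side v = false)).card ≤
      (Finset.univ.filter (fun v => side v = true)).card) :
    metricDim (BS G) = (Finset.univ.filter (fun v => side v = true)).card - 1 := by
  obtain ⟨W, hres, hcard⟩ := upper_bound hadj hM hNM
  apply le_antisymm
  · exact Nat.sInf_le ⟨W, hres, hcard⟩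
  · have hne : {k | ∃ W : Finset (V ⊕ G.edgeSet), IsResolving (BS G) ↑W ∧ W.card = k}.Nonempty :=
      ⟨W.card, W, hres, rfl⟩
    apply le_csInf hne
    rintro k ⟨W', hres', rfl⟩
    exact lower_bound hadj W' hres'

end Abstract
section Inst
open SimpleGraph Finset

noncomputable instance ZDVert.fintype (n : ℕ) [NeZero n] : Fintype (ZDVert n) := by
  have : Finite (ZDVert n) := by unfold ZDVert; exact Subtype.finite
  exact Fintype.ofFinite _

instance ZDVert.deq (n : ℕ) : DecidableEq (ZDVert n) := fun a b =>
  decidable_of_iff (a.1 = b.1) Subtype.ext_iff.symm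

lemma zd_mul_zero_iff {n : ℕ} [NeZero n] (a b : ZMod n) :
    a * b = 0 ↔ n ∣ a.val * b.val := by
  have ha : ((a.val : ℕ) : ZMod n) = a := ZMod.natCast_rightInverse a
  have hb : ((b.val : ℕ) : ZMod n) = b := ZMod.natCast_rightInverse b
  rw [show a * b = ((a.val * b.val : ℕ) : ZMod n) by rw [Nat.cast_mul, ha, hb],
    ZMod.natCast_eq_zero_iff]

lemma card_mult {n : ℕ} [NeZero n] (p q : ℕ) (hp : 1 < p) (hq : 1 < q)
    (hn : n = p * q) :
    (Finset.univ.filter (fun x : ZDVert n => decide (p ∣ x.1.val) = true)).card = q - 1 := by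
  classical
  have hp0 : 0 < p := by omega
  have hmullt : ∀ t, t < q → p * t < n := by
    intro t ht
    rw [hn]
    nlinarith
  have hqlt : q < n := by rw [hn]; nlinarith
  have key : (Finset.univ.filter (fun x : ZDVert n => decide (p ∣ x.1.val) = true)).card
      = (Finset.Ico 1 q).card := by
    refine Finset.card_bij' (fun x _ => x.1.val / p)
      (fun t ht => (⟨((p * t : ℕ) : ZMod n), ?_, ?_⟩ : ZDVert n)) ?_ ?_ ?_ ?_
    case refine_1 =>
      intro h0
      rw [Finset.mem_Ico] at ht
      have hval : ((p * t : ℕ) : ZMod n).val = p * t := ZMod.val_cast_of_lt (hmullt t ht.2)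
      rw [h0, ZMod.val_zero] at hval
      have h1 : 1 ≤ t := ht.1
      nlinarith
    case refine_2 =>
      refine ⟨((q : ℕ) : ZMod n), ?_, ?_⟩
      · intro h0
        have hval : ((q : ℕ) : ZMod n).val = q := ZMod.val_cast_of_lt hqlt
        rw [h0, ZMod.val_zero] at hval
        omega
      · rw [zd_mul_zero_iff]
        rw [Finset.mem_Ico] at ht
        rw [ZMod.val_cast_of_lt (hmullt t ht.2), ZMod.val_cast_of_lt hqlt, hn]
        exact ⟨t, by ring⟩
    case refine_3 =>
      intro x hx
      rw [Finset.mem_filter, decide_eq_true_iff] at hx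
      obtain ⟨-, hdvd⟩ := hx
      have hne : x.1.val ≠ 0 := fun h => x.2.1 ((ZMod.val_eq_zero x.1).mp h)
      have hlt : x.1.val < n := ZMod.val_lt x.1
      rw [Finset.mem_Ico]
      constructor
      · have hge : p ≤ x.1.val := Nat.le_of_dvd (by omega) hdvd
        exact (Nat.one_le_div_iff hp0).mpr hge
      · rw [Nat.div_lt_iff_lt_mul hp0]
        calc x.1.val < n := hlt
          _ = p * q := hn
          _ = q * p := by ring
    case refine_4 =>
      intro t ht
      have ht2 := Finset.mem_Ico.mp ht
      refine Finset.mem_filter.mpr ⟨Finset.mem_univ _, decide_eq_true_iff.mpr ?_⟩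
      show p ∣ ((p * t : ℕ) : ZMod n).val
      rw [ZMod.val_cast_of_lt (hmullt t ht2.2)]
      exact ⟨t, rfl⟩
    case refine_5 =>
      intro x hx
      rw [Finset.mem_filter, decide_eq_true_iff] at hx
      apply Subtype.ext
      show ((p * (x.1.val / p) : ℕ) : ZMod n) = x.1
      rw [Nat.mul_div_cancel' hx.2]
      exact ZMod.natCast_rightInverse x.1
    case refine_6 =>
      intro t ht
      rw [Finset.mem_Ico] at ht
      show ((p * t : ℕ) : ZMod n).val / p = t
      rw [ZMod.val_cast_of_lt (hmullt t ht.2), Nat.mul_div_cancel_left t hp0]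
  rw [key, Nat.card_Ico]

end Inst
theorem stmt2 (p q : ℕ) (hp : p.Prime) (hq : q.Prime) (hop : Odd p) (hoq : Odd q)
    (hpq : p ≠ q) (hp5 : 5 ≤ p) (hq2p : 2 * p - 1 ≤ q) :
    metricDim (BS (zdGraph (p * q))) = q - 2 := by
  classical
  have hp1 : 1 < p := by omega
  have hq9 : 9 ≤ q := by omega
  have hq1 : 1 < q := by omega
  have h45 : 45 ≤ p * q := by nlinarith
  haveI : NeZero (p * q) := ⟨by omega⟩
  have hcop : Nat.Coprime p q := (Nat.coprime_primes hp hq).mpr hpq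
  set side : ZDVert (p * q) → Bool := fun x => decide (p ∣ x.1.val) with hside
  have hZ2 : ∀ x : ZDVert (p * q), ¬(p ∣ x.1.val ∧ q ∣ x.1.val) := by
    rintro x ⟨h1, h2⟩
    have hdvd : (p * q) ∣ x.1.val := Nat.Coprime.mul_dvd_of_dvd_of_dvd hcop h1 h2
    have hlt : x.1.val < p * q := ZMod.val_lt x.1
    have h0 : x.1.val = 0 := by
      rcases Nat.eq_zero_or_pos x.1.val with h | h
      · exact h
      · exact absurd (Nat.le_of_dvd h hdvd) (by omega)
    exact x.2.1 ((ZMod.val_eq_zero x.1).mp h0)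
  have hZ1 : ∀ x : ZDVert (p * q), p ∣ x.1.val ∨ q ∣ x.1.val := by
    intro x
    by_contra hcon
    push_neg at hcon
    obtain ⟨hnp, hnq⟩ := hcon
    obtain ⟨b, hb0, hxb⟩ := x.2.2
    have hdvd : (p * q) ∣ x.1.val * b.val := (zd_mul_zero_iff x.1 b).mp hxb
    have hpd : p ∣ x.1.val * b.val := dvd_trans ⟨q, rfl⟩ hdvd
    have hqd : q ∣ x.1.val * b.val := dvd_trans ⟨p, by ring⟩ hdvd
    have hpb : p ∣ b.val := ((Nat.Prime.dvd_mul hp).mp hpd).resolve_left hnp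
    have hqb : q ∣ b.val := ((Nat.Prime.dvd_mul hq).mp hqd).resolve_left hnq
    have hd2 : (p * q) ∣ b.val := hcop.mul_dvd_of_dvd_of_dvd hpb hqb
    have hlt : b.val < p * q := ZMod.val_lt b
    have h0 : b.val = 0 := by
      rcases Nat.eq_zero_or_pos b.val with h | h
      · exact h
      · exact absurd (Nat.le_of_dvd h hd2) (by omega)
    exact hb0 ((ZMod.val_eq_zero b).mp h0)
  have hadj : ∀ x y : ZDVert (p * q), (zdGraph (p * q)).Adj x y ↔ side x ≠ side y := by
    intro x y
    have hx1 := hZ1 x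
    have hy1 := hZ1 y
    have hx2 := hZ2 x
    have hy2 := hZ2 y
    simp only [hside, ne_eq, decide_eq_decide]
    constructor
    · rintro ⟨hne, hmul⟩ hiff
      have hdvd : (p * q) ∣ x.1.val * y.1.val := (zd_mul_zero_iff x.1 y.1).mp hmul
      by_cases hpx : p ∣ x.1.val
      · have hpy := hiff.mp hpx
        have hqd : q ∣ x.1.val * y.1.val := dvd_trans ⟨p, by ring⟩ hdvd
        rcases (hq.dvd_mul).mp hqd with h | h
        · exact hx2 ⟨hpx, h⟩
        · exact hy2 ⟨hpy, h⟩
      · have hpy : ¬ p ∣ y.1.val := fun h => hpx (hiff.mpr h)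
        have hpd : p ∣ x.1.val * y.1.val := dvd_trans ⟨q, rfl⟩ hdvd
        rcases (hp.dvd_mul).mp hpd with h | h
        · exact hpx h
        · exact hpy h
    · intro hiff
      by_cases hpx : p ∣ x.1.val
      · have hpy : ¬ p ∣ y.1.val := fun h => hiff ⟨fun _ => h, fun _ => hpx⟩
        have hqy : q ∣ y.1.val := hy1.resolve_left hpy
        refine ⟨?_, (zd_mul_zero_iff x.1 y.1).mpr (mul_dvd_mul hpx hqy)⟩
        intro h
        rw [h] at hpx
        exact hpy hpx
      · have hqx : q ∣ x.1.val := hx1.resolve_left hpx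
        have hpy : p ∣ y.1.val := by
          by_contra hpy
          exact hiff ⟨fun h => absurd h hpx, fun h => absurd h hpy⟩
        refine ⟨?_, (zd_mul_zero_iff x.1 y.1).mpr ?_⟩
        · intro h
          rw [h] at hpx
          exact hpx hpy
        · have hm := mul_dvd_mul hpy hqx
          rwa [Nat.mul_comm y.1.val x.1.val] at hm
  have hcardB : (Finset.univ.filter (fun v => side v = true)).card = q - 1 := by
    simp only [hside]
    exact card_mult p q hp1 hq1 rfl
  have hcardA : (Finset.univ.filter (fun v => side v = false)).card = p - 1 := by
    have heq : Finset.univ.filter (fun v : ZDVert (p * q) => side v = false)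
        = Finset.univ.filter (fun x : ZDVert (p * q) => decide (q ∣ x.1.val) = true) := by
      apply Finset.filter_congr
      intro x _
      simp only [hside, decide_eq_false_iff_not, decide_eq_true_iff]
      constructor
      · intro h
        exact (hZ1 x).resolve_left h
      · intro h hp'
        exact hZ2 x ⟨hp', h⟩
    rw [heq]
    exact card_mult q p hq1 hp1 (Nat.mul_comm p q)
  rw [abstract_metricDim hadj (by rw [hcardA]; omega) (by rw [hcardA, hcardB]; omega), hcardB]
  omega
end
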